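/- For real s > 1/2, the product F₁(s) = (∑_{n≥1} (−1)^ω(n) n^{−s}) · ζ(s) extends to ∏_p (1 − 1/p^{2s} − 2/p^{3s} − ⋯) for s > 1, a product that converges absolutely for real s > 1/2; equivalently, for s > 1, ∑_{n≥1} (−1)^ω(n) n^{−s} = F₁(s)/ζ(s) where F₁ is given by an absolutely convergent Euler product on s > 1/2. -/

import Mathlib

open ArithmeticFunction

private lemma omega_card (n : ℕ) :
    ArithmeticFunction.cardDistinctFactors n = n.primeFactors.card := by
  rw [ArithmeticFunction.cardDistinctFactors_apply, Nat.primeFactors, List.card_toFinset]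

private lemma rpow_primes_pos {p : Nat.Primes} {s : ℝ} (hs : 0 < s) :
    1 < (p : ℝ) ^ s := by
  have hp : (1:ℝ) < (p:ℕ) := by exact_mod_cast p.prop.one_lt
  apply Real.one_lt_rpow_iff_of_pos (by linarith) |>.mpr
  exact Or.inl ⟨hp, hs⟩

private lemma factor_eq {a : ℝ} (ha : a ≠ 1) :
    (1 - 2 * a) / (1 - a) ^ 2 = 1 - (a / (1 - a)) ^ 2 := by
  have h : (1 : ℝ) - a ≠ 0 := by
    intro h; apply ha; linarith [sub_eq_zero.mp h]
  field_simp
  ring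

private lemma cast_pow_rpow (p : Nat.Primes) (s : ℝ) (e : ℕ) :
    (((p:ℕ) ^ e : ℕ) : ℝ) ^ s = ((p : ℝ) ^ s) ^ e := by
  have h0 : (0:ℝ) ≤ (p:ℕ) := by positivity
  push_cast
  rw [← Real.rpow_natCast ((p:ℝ) ^ s) e, ← Real.rpow_natCast (p:ℝ) e,
    ← Real.rpow_mul h0, ← Real.rpow_mul h0, mul_comm]

-- local sum for zeta summand
private lemma hasSum_g (p : Nat.Primes) {s : ℝ} (hs : 1 < s) :
    HasSum (fun e : ℕ => (if ((p:ℕ) ^ e : ℕ) = 0 then (0:ℝ) else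
      1 / (((p:ℕ) ^ e : ℕ) : ℝ) ^ s)) (1 - 1 / (p : ℝ) ^ s)⁻¹ := by
  set a : ℝ := 1 / (p : ℝ) ^ s with ha
  have h1 : 1 < (p : ℝ) ^ s := rpow_primes_pos (by linarith)
  have ha0 : 0 ≤ a := by positivity
  have ha1 : a < 1 := by rw [ha, div_lt_one (by linarith)]; linarith
  have hgeom := hasSum_geometric_of_lt_one ha0 ha1
  have key : ∀ e : ℕ, (if ((p:ℕ) ^ e : ℕ) = 0 then (0:ℝ) else
      1 / (((p:ℕ) ^ e : ℕ) : ℝ) ^ s) = a ^ e := by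
    intro e
    rw [if_neg (pow_ne_zero e p.prop.pos.ne'), cast_pow_rpow, ha, one_div, one_div, inv_pow]
  simpa only [key] using hgeom

private lemma hasSum_f (p : Nat.Primes) {s : ℝ} (hs : 1 < s) :
    HasSum (fun e : ℕ => (if ((p:ℕ) ^ e : ℕ) = 0 then (0:ℝ) else
      ((-1 : ℝ) ^ (ArithmeticFunction.cardDistinctFactors ((p:ℕ) ^ e))) /
        (((p:ℕ) ^ e : ℕ) : ℝ) ^ s))
      (2 + -(1 - 1 / (p : ℝ) ^ s)⁻¹) := by
  set a : ℝ := 1 / (p : ℝ) ^ s with ha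
  have h1 : 1 < (p : ℝ) ^ s := rpow_primes_pos (by linarith)
  have ha0 : 0 ≤ a := by positivity
  have ha1 : a < 1 := by rw [ha, div_lt_one (by linarith)]; linarith
  have hgeom := (hasSum_geometric_of_lt_one ha0 ha1).neg
  have hsingle := hasSum_ite_eq (0 : ℕ) (2 : ℝ)
  have hsum := hsingle.add hgeom
  have key : ∀ e : ℕ, (if ((p:ℕ) ^ e : ℕ) = 0 then (0:ℝ) else
      ((-1 : ℝ) ^ (ArithmeticFunction.cardDistinctFactors ((p:ℕ) ^ e))) /
        (((p:ℕ) ^ e : ℕ) : ℝ) ^ s) = (if e = 0 then (2:ℝ) else 0) + -(a ^ e) := by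
    intro e
    rw [if_neg (pow_ne_zero e p.prop.pos.ne'), cast_pow_rpow]
    cases e with
    | zero => norm_num [ArithmeticFunction.cardDistinctFactors_one]
    | succ k =>
        rw [ArithmeticFunction.cardDistinctFactors_apply_prime_pow p.prop k.succ_ne_zero,
          pow_one, ha, div_pow, one_pow, if_neg k.succ_ne_zero, zero_add, neg_div, one_div]
  simpa only [key] using hsum

private lemma F_mul {s : ℝ} (hs : 0 < s) {m n : ℕ} (h : Nat.Coprime m n) :
    (if m * n = 0 then (0:ℝ) else
        ((-1 : ℝ) ^ (ArithmeticFunction.cardDistinctFactors (m * n))) / ((m * n : ℕ) : ℝ) ^ s) =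
      (if m = 0 then (0:ℝ) else
        ((-1 : ℝ) ^ (ArithmeticFunction.cardDistinctFactors m)) / (m : ℝ) ^ s) *
      (if n = 0 then (0:ℝ) else
        ((-1 : ℝ) ^ (ArithmeticFunction.cardDistinctFactors n)) / (n : ℝ) ^ s) := by
  rcases eq_or_ne m 0 with rfl | hm
  · simp
  rcases eq_or_ne n 0 with rfl | hn
  · simp
  rw [if_neg (mul_ne_zero hm hn), if_neg hm, if_neg hn]
  have homega : ArithmeticFunction.cardDistinctFactors (m * n) =
      ArithmeticFunction.cardDistinctFactors m + ArithmeticFunction.cardDistinctFactors n := by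
    rw [omega_card, omega_card, omega_card, Nat.Coprime.primeFactors_mul h,
      Finset.card_union_of_disjoint h.disjoint_primeFactors]
  have hcast : ((m * n : ℕ) : ℝ) ^ s = (m : ℝ) ^ s * (n : ℝ) ^ s := by
    push_cast
    exact Real.mul_rpow (Nat.cast_nonneg m) (Nat.cast_nonneg n)
  rw [homega, hcast, pow_add, div_mul_div_comm]

private lemma F_summable {s : ℝ} (hs : 1 < s) :
    Summable (fun n : ℕ => ‖(if n = 0 then (0:ℝ) else
      ((-1 : ℝ) ^ (ArithmeticFunction.cardDistinctFactors n)) / (n : ℝ) ^ s)‖) := by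
  have hz : Summable (fun n : ℕ => 1 / (n : ℝ) ^ s) := Real.summable_one_div_nat_rpow.mpr hs
  refine Summable.of_nonneg_of_le (fun n => norm_nonneg _) (fun n => ?_) hz
  rcases eq_or_ne n 0 with rfl | hn
  · simp [Real.zero_rpow (show s ≠ 0 by linarith)]
  · have hp : (0:ℝ) < (n : ℝ) ^ s :=
      Real.rpow_pos_of_pos (by exact_mod_cast Nat.pos_of_ne_zero hn) s
    rw [if_neg hn, Real.norm_eq_abs, abs_div, abs_pow, abs_neg, abs_one, one_pow,
      abs_of_pos hp]

private lemma G_summable {s : ℝ} (hs : 1 < s) :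
    Summable (fun n : ℕ => ‖(if n = 0 then (0:ℝ) else 1 / (n : ℝ) ^ s)‖) := by
  have hz : Summable (fun n : ℕ => 1 / (n : ℝ) ^ s) := Real.summable_one_div_nat_rpow.mpr hs
  refine Summable.of_nonneg_of_le (fun n => norm_nonneg _) (fun n => ?_) hz
  rcases eq_or_ne n 0 with rfl | hn
  · simp [Real.zero_rpow (show s ≠ 0 by linarith)]
  · have hp : (0:ℝ) < (n : ℝ) ^ s :=
      Real.rpow_pos_of_pos (by exact_mod_cast Nat.pos_of_ne_zero hn) s
    rw [if_neg hn, Real.norm_eq_abs, abs_div, abs_one, abs_of_pos hp]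

private lemma G_mul {s : ℝ} {m n : ℕ} (h : Nat.Coprime m n) :
    (if m * n = 0 then (0:ℝ) else 1 / ((m * n : ℕ) : ℝ) ^ s) =
      (if m = 0 then (0:ℝ) else 1 / (m : ℝ) ^ s) *
      (if n = 0 then (0:ℝ) else 1 / (n : ℝ) ^ s) := by
  rcases eq_or_ne m 0 with rfl | hm
  · simp
  rcases eq_or_ne n 0 with rfl | hn
  · simp
  rw [if_neg (mul_ne_zero hm hn), if_neg hm, if_neg hn]
  have hcast : ((m * n : ℕ) : ℝ) ^ s = (m : ℝ) ^ s * (n : ℝ) ^ s := by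
    push_cast
    exact Real.mul_rpow (Nat.cast_nonneg m) (Nat.cast_nonneg n)
  rw [hcast, div_mul_div_comm, one_mul]

private lemma part2 {s : ℝ} (hs : 1 < s) :
    (∑' n : ℕ, (if n = 0 then (0 : ℝ) else
        ((-1 : ℝ) ^ (ArithmeticFunction.cardDistinctFactors n)) / (n : ℝ) ^ s)) *
      (∑' n : ℕ, (if n = 0 then (0 : ℝ) else 1 / (n : ℝ) ^ s)) =
      ∏' p : Nat.Primes, (1 - 2 / (p : ℝ) ^ s) / (1 - 1 / (p : ℝ) ^ s) ^ 2 := by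
  set F : ℕ → ℝ := fun n => if n = 0 then (0:ℝ) else
    ((-1 : ℝ) ^ (ArithmeticFunction.cardDistinctFactors n)) / (n : ℝ) ^ s with hF
  set G : ℕ → ℝ := fun n => if n = 0 then (0:ℝ) else 1 / (n : ℝ) ^ s with hG
  have HF := EulerProduct.eulerProduct_hasProd (f := F)
    (by simp [hF, ArithmeticFunction.cardDistinctFactors_one])
    (fun {m n} h => F_mul (by linarith) h) (F_summable hs) (by simp [hF])
  have HG := EulerProduct.eulerProduct_hasProd (f := G)
    (by simp [hG]) (fun {m n} h => G_mul h) (G_summable hs) (by simp [hG])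
  have H := HF.mul HG
  have key : (fun p : Nat.Primes => (∑' e : ℕ, F ((p:ℕ) ^ e)) * (∑' e : ℕ, G ((p:ℕ) ^ e))) =
      (fun p : Nat.Primes => (1 - 2 / (p : ℝ) ^ s) / (1 - 1 / (p : ℝ) ^ s) ^ 2) := by
    funext p
    have h1 : 1 < (p : ℝ) ^ s := rpow_primes_pos (by linarith)
    have hA : (∑' e : ℕ, F ((p:ℕ) ^ e)) = 2 + -(1 - 1 / (p : ℝ) ^ s)⁻¹ :=
      (hasSum_f p hs).tsum_eq
    have hB : (∑' e : ℕ, G ((p:ℕ) ^ e)) = (1 - 1 / (p : ℝ) ^ s)⁻¹ :=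
      (hasSum_g p hs).tsum_eq
    rw [hA, hB]
    set t : ℝ := (p : ℝ) ^ s
    have ht0 : t ≠ 0 := by linarith
    have hu : t - 1 ≠ 0 := sub_ne_zero.mpr (ne_of_gt h1)
    have e1 : 1 - 1/t = (t-1)/t := by field_simp
    have e2 : 1 - 2/t = (t-2)/t := by field_simp
    rw [e1, e2, div_pow, inv_div, div_div_div_eq]
    field_simp
    ring
  rw [key] at H
  exact H.tprod_eq.symm

private lemma fac_bounds {t : ℝ} (ht : 3 < t) :
    0 < (1 - 2/t)/(1 - 1/t)^2 ∧
    |Real.log ((1 - 2/t)/(1 - 1/t)^2)| ≤ 3 * (1/t^2) := by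
  set a : ℝ := 1/t with hadef
  have ht0 : (0:ℝ) < t := by linarith
  have ha0 : 0 < a := by positivity
  have ha3 : a < 1/3 := by rw [hadef, div_lt_div_iff₀ (by linarith) (by norm_num)]; linarith
  have h1a : (2:ℝ)/3 < 1 - a := by linarith
  set x : ℝ := (a/(1-a))^2 with hxdef
  have hx0 : 0 ≤ x := sq_nonneg _
  have hdiv : a/(1-a) ≤ (3/2)*a := by rw [div_le_iff₀ (by linarith)]; nlinarith
  have hdiv0 : 0 ≤ a/(1-a) := by positivity
  have hxa : x ≤ (9/4) * a^2 := by rw [hxdef]; nlinarith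
  have hx4 : x ≤ 1/4 := by nlinarith
  have hfac : (1 - 2/t)/(1-a)^2 = 1 - x := by
    have h2a : 2/t = 2*a := by rw [hadef]; ring
    rw [h2a, factor_eq (ne_of_lt (by linarith)), hxdef]
  have ha2 : a^2 = 1/t^2 := by rw [hadef]; ring
  rw [hfac]
  constructor
  · linarith
  · have hxlt : (0:ℝ) < 1 - x := by linarith
    have hlog0 : Real.log (1-x) ≤ 0 := Real.log_nonpos (by linarith) (by linarith)
    have hbound : -Real.log (1-x) ≤ x/(1-x) := by
      have h := Real.log_le_sub_one_of_pos (show (0:ℝ) < (1-x)⁻¹ by positivity)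
      rw [Real.log_inv] at h
      have he : (1-x)⁻¹ - 1 = x/(1-x) := by field_simp; ring
      linarith
    have h43 : x/(1-x) ≤ (4/3)*x := by rw [div_le_iff₀ (by linarith)]; nlinarith
    rw [abs_of_nonpos hlog0]
    linarith

private lemma part1 {s : ℝ} (hs : 1/2 < s) :
    Multipliable (fun p : Nat.Primes =>
      (1 - 2 / (p : ℝ) ^ s) / (1 - 1 / (p : ℝ) ^ s) ^ 2) := by
  set fac : Nat.Primes → ℝ := fun p => (1 - 2/(p:ℝ)^s)/(1 - 1/(p:ℝ)^s)^2 with hfac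
  set S : Set Nat.Primes := {p | (p:ℝ)^s ≤ 3} with hS
  have hs0 : 0 < s := by linarith
  have hSfin : S.Finite := by
    have hsub : S ⊆ (fun p : Nat.Primes => (p:ℕ)) ⁻¹' Set.Iic 9 := by
      intro p hp
      simp only [Set.mem_preimage, Set.mem_Iic]
      by_contra hc
      push_neg at hc
      have h10 : (10:ℝ) ≤ ((p:ℕ):ℝ) := by exact_mod_cast hc
      have hge : ((p:ℕ):ℝ)^(1/2:ℝ) ≤ ((p:ℕ):ℝ)^s :=
        Real.rpow_le_rpow_of_exponent_le (by linarith) (le_of_lt hs)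
      have hsq : (((p:ℕ):ℝ)^(1/2:ℝ))^(2:ℕ) = ((p:ℕ):ℝ) := by
        rw [← Real.rpow_natCast (((p:ℕ):ℝ)^(1/2:ℝ)) 2, ← Real.rpow_mul (by linarith)]
        norm_num
      have hp3 : (3:ℝ) < ((p:ℕ):ℝ)^(1/2:ℝ) := by
        nlinarith [Real.rpow_nonneg (show (0:ℝ) ≤ ((p:ℕ):ℝ) by linarith) (1/2:ℝ)]
      have h3 : ((p:ℕ):ℝ)^s ≤ 3 := hp
      linarith
    exact ((Set.finite_Iic 9).preimage
      (Set.injOn_of_injective Nat.Primes.coe_nat_injective)).subset hsub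
  haveI := hSfin.fintype
  have m1 : Multipliable (fun p : S => fac p) := (hasProd_fintype _).multipliable
  have hC : ∀ p : ↥Sᶜ, 3 < (((p:Nat.Primes):ℕ):ℝ)^s := fun p => not_le.mp p.prop
  have hconv : ∀ p : Nat.Primes, 3 * (1/((((p:ℕ):ℝ))^s)^2) = 3 * ((p:ℕ):ℝ)^(-(2*s)) := by
    intro p
    have hp0 : (0:ℝ) ≤ ((p:ℕ):ℝ) := Nat.cast_nonneg _
    have h2 : ((p:ℕ):ℝ)^(2*s) = (((p:ℕ):ℝ)^s)^(2:ℕ) := by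
      rw [show (2:ℝ)*s = s*((2:ℕ):ℝ) by push_cast; ring, Real.rpow_mul hp0,
        Real.rpow_natCast]
    rw [Real.rpow_neg hp0, h2, one_div]
  have hsummaj : Summable (fun p : Nat.Primes => 3 * ((p:ℕ):ℝ)^(-(2*s))) :=
    (Nat.Primes.summable_rpow.mpr (by linarith)).mul_left 3
  have hlog : Summable (fun p : ↥Sᶜ => Real.log (fac p)) := by
    apply summable_abs_iff.mp
    apply Summable.of_nonneg_of_le (fun p => abs_nonneg _) (fun p => ?_)
      (hsummaj.subtype Sᶜ)
    calc |Real.log (fac p)| ≤ 3 * (1/((((p:Nat.Primes):ℕ):ℝ)^s)^2) :=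
          (fac_bounds (hC p)).2
      _ = 3 * (((p:Nat.Primes):ℕ):ℝ)^(-(2*s)) := hconv p
  have m2 : Multipliable (fun p : ↥Sᶜ => fac p) := by
    have h := hlog.hasSum.rexp.multipliable
    exact (multipliable_congr (fun p => Real.exp_log (fac_bounds (hC p)).1)).mp h
  exact Multipliable.mul_compl (f := fac) (s := S) m1 m2

theorem F1_euler_product (s : ℝ) :
    (1 / 2 < s →
      Multipliable (fun p : Nat.Primes =>
        (1 - 2 / (p : ℝ) ^ s) / (1 - 1 / (p : ℝ) ^ s) ^ 2)) ∧
    (1 < s →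
      (∑' n : ℕ, (if n = 0 then (0 : ℝ) else
          ((-1 : ℝ) ^ (ArithmeticFunction.cardDistinctFactors n)) / (n : ℝ) ^ s)) *
        (∑' n : ℕ, (if n = 0 then (0 : ℝ) else 1 / (n : ℝ) ^ s)) =
        ∏' p : Nat.Primes, (1 - 2 / (p : ℝ) ^ s) / (1 - 1 / (p : ℝ) ^ s) ^ 2) :=
  ⟨fun h => part1 h, fun h => part2 h⟩
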